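/- Let α ∈ (0,1), ρ1 > 0, ρ2 > 0, s ∈ ℝ, and let e1, e2 : ℝ → ℝ be differentiable at ρ1 and ρ2 respectively. Then the partial derivatives of the mixture specific internal energy E(α, ρ1, ρ2, s) = c1 e1(ρ1) + c2 e2(ρ2) + (c1 c2 / 2) s, taken with respect to ρ1 and ρ2 with the other arguments held fixed, satisfy the identity (ρ/α) ∂E/∂ρ1 − (ρ/(1−α)) ∂E/∂ρ2 = μ1 − μ2 − ((c1 − c2)/2) s, where μ_j = e_j(ρ_j) + p_j/ρ_j and p_j = ρ_j² e_j'(ρ_j). In other words, the source potential φ of the relative velocity equation equals the difference of the phase chemical potentials minus ((c1 − c2)/2)|w|². -/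

import Mathlib

/-- Mixture specific internal energy `E(α, ρ1, ρ2, s) = c1 e1(ρ1) + c2 e2(ρ2) + (c1 c2/2) s`,
where `c1 = α ρ1 / ρ`, `c2 = (1-α) ρ2 / ρ`, `ρ = α ρ1 + (1-α) ρ2` and `s = |w|²`. -/
noncomputable def mixE (e1 e2 : ℝ → ℝ) (α ρ1 ρ2 s : ℝ) : ℝ :=
  (α * ρ1 / (α * ρ1 + (1 - α) * ρ2)) * e1 ρ1
  + ((1 - α) * ρ2 / (α * ρ1 + (1 - α) * ρ2)) * e2 ρ2
  + ((α * ρ1 / (α * ρ1 + (1 - α) * ρ2)) * ((1 - α) * ρ2 / (α * ρ1 + (1 - α) * ρ2)) / 2) * s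

lemma mix_hasDerivAt (a b C s : ℝ) (f : ℝ → ℝ) (x : ℝ)
    (hf : DifferentiableAt ℝ f x) (hD : a * x + b ≠ 0) :
    HasDerivAt (fun r => (a * r / (a * r + b)) * f r + (b / (a * r + b)) * C
      + ((a * r / (a * r + b)) * (b / (a * r + b)) / 2) * s)
      ((a * f x + a * x * deriv f x) / (a * x + b) - a * x * f x * a / (a * x + b) ^ 2
        - b * C * a / (a * x + b) ^ 2 + s / 2 * (a * b * (b - a * x) / (a * x + b) ^ 3)) x := by
  have hD' : HasDerivAt (fun r => a * r + b) a x := by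
    simpa using ((hasDerivAt_id x).const_mul a).add_const b
  have hnum : HasDerivAt (fun r => a * r) a x := by
    simpa using (hasDerivAt_id x).const_mul a
  have hc1 : HasDerivAt (fun r => a * r / (a * r + b))
      ((a * (a * x + b) - a * x * a) / (a * x + b) ^ 2) x := hnum.div hD' hD
  have h1 := hc1.mul hf.hasDerivAt
  have h2 : HasDerivAt (fun r => b / (a * r + b) * C)
      (-(b * a) / (a * x + b) ^ 2 * C) x := by
    have := ((hasDerivAt_const x b).div hD' hD).mul_const C
    simpa using this
  have h3 := ((hc1.mul ((hasDerivAt_const x b).div hD' hD)).div_const 2).mul_const s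
  have := (h1.add h2).add h3
  refine this.congr_deriv ?_
  have hx : a * x + b ≠ 0 := hD
  simp only [Pi.div_apply]
  field_simp
  ring

/-- The source potential of the relative velocity equation:
`(ρ/α) ∂E/∂ρ1 − (ρ/(1−α)) ∂E/∂ρ2 = μ1 − μ2 − ((c1 − c2)/2) s`,
where `μ_j = e_j(ρ_j) + p_j/ρ_j` and `p_j = ρ_j² e_j'(ρ_j)`
(so `μ_j = e_j(ρ_j) + ρ_j e_j'(ρ_j)`). -/
theorem source_potential_eq_chemical_potential_difference
    (α ρ1 ρ2 s : ℝ) (hα : α ∈ Set.Ioo (0 : ℝ) 1) (hρ1 : 0 < ρ1) (hρ2 : 0 < ρ2)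
    (e1 e2 : ℝ → ℝ) (he1 : DifferentiableAt ℝ e1 ρ1) (he2 : DifferentiableAt ℝ e2 ρ2) :
    (α * ρ1 + (1 - α) * ρ2) / α * deriv (fun r => mixE e1 e2 α r ρ2 s) ρ1
    - (α * ρ1 + (1 - α) * ρ2) / (1 - α) * deriv (fun r => mixE e1 e2 α ρ1 r s) ρ2
    = (e1 ρ1 + ρ1 ^ 2 * deriv e1 ρ1 / ρ1) - (e2 ρ2 + ρ2 ^ 2 * deriv e2 ρ2 / ρ2)
      - ((α * ρ1 / (α * ρ1 + (1 - α) * ρ2) - (1 - α) * ρ2 / (α * ρ1 + (1 - α) * ρ2)) / 2) * s := by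
  obtain ⟨hα0, hα1⟩ := hα
  have hαa : 0 < 1 - α := by linarith
  have hDpos : 0 < α * ρ1 + (1 - α) * ρ2 := by positivity
  have hD : α * ρ1 + (1 - α) * ρ2 ≠ 0 := ne_of_gt hDpos
  have hD2 : (1 - α) * ρ2 + α * ρ1 ≠ 0 := by linarith [hDpos]
  have key1 : (fun r => mixE e1 e2 α r ρ2 s)
      = fun r => (α * r / (α * r + (1 - α) * ρ2)) * e1 r
        + ((1 - α) * ρ2 / (α * r + (1 - α) * ρ2)) * e2 ρ2
        + ((α * r / (α * r + (1 - α) * ρ2)) * ((1 - α) * ρ2 / (α * r + (1 - α) * ρ2)) / 2) * s := by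
    funext r; simp [mixE]
  have key2 : (fun r => mixE e1 e2 α ρ1 r s)
      = fun r => ((1 - α) * r / ((1 - α) * r + α * ρ1)) * e2 r
        + (α * ρ1 / ((1 - α) * r + α * ρ1)) * e1 ρ1
        + (((1 - α) * r / ((1 - α) * r + α * ρ1)) * (α * ρ1 / ((1 - α) * r + α * ρ1)) / 2) * s := by
    funext r; unfold mixE; ring_nf
  have d1 := (mix_hasDerivAt α ((1 - α) * ρ2) (e2 ρ2) s e1 ρ1 he1 hD).deriv
  have d2 := (mix_hasDerivAt (1 - α) (α * ρ1) (e1 ρ1) s e2 ρ2 he2 hD2).deriv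
  rw [key1, key2, d1, d2]
  have h1 : ρ1 ≠ 0 := ne_of_gt hρ1
  have h2 : ρ2 ≠ 0 := ne_of_gt hρ2
  have h3 : α ≠ 0 := ne_of_gt hα0
  have h4 : (1 : ℝ) - α ≠ 0 := ne_of_gt hαa
  field_simp
  ring
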